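/- arXiv:2006.03006 — 7 statements merged into one kernel-verified Lean document; each statement's English description precedes it below -/
import Mathlib

section
/- Let n ≥ 2 and let α₁ > α₂ > … > αₙ be real numbers. Then the integral of the Vandermonde determinant Δ_{n−1}(β) = ∏_{1≤i<j≤n−1}(β_i − β_j) over the interlacing region {β ∈ ℝ^{n−1} : α₁ ≥ β₁ ≥ α₂ ≥ β₂ ≥ … ≥ β_{n−1} ≥ αₙ}, with respect to Lebesgue measure on ℝ^{n−1}, equals Δ_n(α)/(n−1)!. -/
/-!
Write `Δ_{n-1}(β) = det ((-β_i)^j)`: row `i` depends only on `β_i`, and the interlacing region is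
the box `∏ [α_{i+1}, α_i]`. By multilinearity of the determinant and Fubini, the integral is the
determinant of the row-wise integrals `((-α_{i+1})^{j+1} - (-α_i)^{j+1}) / (j+1)`. Up to the
column factors `1/(j+1)`, whose product is `1/(n-1)!`, these are the differences of consecutive rows
of the Vandermonde matrix of `-α`, and that determinant is `Δ_n(α)`.
-/

open MeasureTheory Matrix Finset

section Determinants

variable {R : Type*} [CommRing R]

theorem det_vandermonde_neg {n : ℕ} (v : Fin n → R) :
    (vandermonde (-v)).det = ∏ i : Fin n, ∏ j ∈ Ioi i, (v i - v j) := by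
  simp only [det_vandermonde, Pi.neg_apply, neg_sub_neg]

theorem det_vandermonde_eq_det_pow_succ_sub {m : ℕ} (v : Fin (m + 1) → R) :
    (vandermonde v).det =
      (of fun i j : Fin m => v i.succ ^ (j + 1 : ℕ) - v i.castSucc ^ (j + 1 : ℕ)).det := by
  set A : Matrix (Fin (m + 1)) (Fin (m + 1)) R := of fun i =>
    Fin.cases (vandermonde v 0) (fun i j => vandermonde v i.succ j - vandermonde v i.castSucc j) i
  have hA : (vandermonde v).det = A.det :=
    det_eq_of_forall_row_eq_smul_add_pred (fun _ => 1) (fun _ => by simp [A])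
      (fun _ _ => by simp [A])
  have hcol (i : Fin m) : A i.succ 0 = 0 := by simp [A, vandermonde_apply]
  have hminor : A.submatrix Fin.succ Fin.succ
      = of fun i j : Fin m => v i.succ ^ (j + 1 : ℕ) - v i.castSucc ^ (j + 1 : ℕ) := by
    ext i j
    simp [A, vandermonde_apply]
  rw [hA, det_succ_column_zero, Fin.sum_univ_succ, Finset.sum_eq_zero fun i _ => by simp [hcol],
    Fin.succAbove_zero, hminor]
  simp [A, vandermonde_apply]

end Determinants

theorem det_pow_succ_sub_div_eq {K : Type*} [Field K] [CharZero K] {m : ℕ} (v : Fin (m + 1) → K) :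
    (of fun i j : Fin m =>
        (v i.succ ^ (j + 1 : ℕ) - v i.castSucc ^ (j + 1 : ℕ)) / (j + 1 : ℕ)).det
      = (vandermonde v).det / m.factorial := by
  have hscale : ∏ j : Fin m, ((j + 1 : ℕ) : K)⁻¹ = (m.factorial : K)⁻¹ := by
    rw [Finset.prod_inv_distrib, ← Nat.cast_prod, Fin.prod_univ_eq_prod_range (· + 1),
      Finset.prod_range_add_one_eq_factorial]
  simp_rw [div_eq_inv_mul]
  refine (det_mul_row (fun j : Fin m => ((j + 1 : ℕ) : K)⁻¹)
    (of fun i j : Fin m => v i.succ ^ (j + 1 : ℕ) - v i.castSucc ^ (j + 1 : ℕ))).trans ?_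
  rw [hscale, det_vandermonde_eq_det_pow_succ_sub]

theorem integral_det_rowwise {ι 𝕜 : Type*} [Fintype ι] [DecidableEq ι] [RCLike 𝕜]
    {E : ι → Type*} {mE : ∀ i, MeasurableSpace (E i)} {μ : (i : ι) → Measure (E i)}
    [∀ i, SigmaFinite (μ i)] (f : (i : ι) → ι → E i → 𝕜) (hf : ∀ i j, Integrable (f i j) (μ i)) :
    ∫ x, (of fun i j => f i j (x i)).det ∂Measure.pi μ = (of fun i j => ∫ t, f i j t ∂μ i).det := by
  simp_rw [← det_transpose (of _), det_apply', transpose_apply, of_apply]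
  rw [integral_finsetSum _ fun σ _ =>
    (Integrable.fintype_prod_dep fun i => hf i (σ i)).const_mul _]
  simp_rw [integral_const_mul, integral_fintype_prod_eq_prod]

theorem setIntegral_univ_pi_det_rowwise {ι 𝕜 : Type*} [Fintype ι] [DecidableEq ι] [RCLike 𝕜]
    {E : ι → Type*} {mE : ∀ i, MeasurableSpace (E i)} {μ : (i : ι) → Measure (E i)}
    [∀ i, SigmaFinite (μ i)] (s : (i : ι) → Set (E i)) (f : (i : ι) → ι → E i → 𝕜)
    (hf : ∀ i j, IntegrableOn (f i j) (s i) (μ i)) :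
    ∫ x in Set.univ.pi s, (of fun i j => f i j (x i)).det ∂Measure.pi μ
      = (of fun i j => ∫ t in s i, f i j t ∂μ i).det := by
  rw [Measure.restrict_pi_pi]
  exact integral_det_rowwise f hf

theorem integral_Icc_neg_pow {a b : ℝ} (hab : a ≤ b) (n : ℕ) :
    ∫ t in Set.Icc a b, (-t) ^ n = ((-a) ^ (n + 1) - (-b) ^ (n + 1)) / (n + 1 : ℕ) := by
  rw [integral_Icc_eq_integral_Ioc, ← intervalIntegral.integral_of_le hab,
    intervalIntegral.integral_comp_neg (· ^ n), integral_pow]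
  norm_num

/-- the density of Baryshnikov's theorem integrates to 1: the integral of
the Vandermonde determinant `Δ_{n-1}(β)` over the interlacing region
`{β : α₁ ≥ β₁ ≥ α₂ ≥ … ≥ β_{n-1} ≥ αₙ}` equals `Δ_n(α)/(n-1)!`.  Here `n = M + 2`. -/
theorem stmt_1 (M : ℕ) (α : Fin (M + 2) → ℝ) (hα : StrictAnti α) :
    ∫ β in {β : Fin (M + 1) → ℝ |
        ∀ i : Fin (M + 1), β i ≤ α i.castSucc ∧ α i.succ ≤ β i},
        ∏ i : Fin (M + 1), ∏ j ∈ Finset.Ioi i, (β i - β j)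
      = (∏ i : Fin (M + 2), ∏ j ∈ Finset.Ioi i, (α i - α j)) / (Nat.factorial (M + 1) : ℝ) := by
  have hbox : {β : Fin (M + 1) → ℝ | ∀ i, β i ≤ α i.castSucc ∧ α i.succ ≤ β i}
      = Set.univ.pi fun i => Set.Icc (α i.succ) (α i.castSucc) := by
    ext β
    simp only [Set.mem_ofPred_eq, Set.mem_univ_pi, Set.mem_Icc, and_comm]
  have hentry (i j : Fin (M + 1)) : ∫ t in Set.Icc (α i.succ) (α i.castSucc), (-t) ^ (j : ℕ)
      = ((-α) i.succ ^ (j + 1 : ℕ) - (-α) i.castSucc ^ (j + 1 : ℕ)) / (j + 1 : ℕ) :=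
    integral_Icc_neg_pow (hα Fin.castSucc_lt_succ).le j
  simp_rw [← det_vandermonde_neg, hbox, volume_pi]
  calc _ = (of fun i j : Fin (M + 1) =>
          ∫ t in Set.Icc (α i.succ) (α i.castSucc), (-t) ^ (j : ℕ)).det :=
        setIntegral_univ_pi_det_rowwise _ (fun (_ j : Fin (M + 1)) (t : ℝ) => (-t) ^ (j : ℕ))
          fun _ _ => (continuous_neg.pow _).integrableOn_Icc
    _ = _ := by simp_rw [hentry]; exact det_pow_succ_sub_div_eq (-α)
end

section
/- Let n ≥ 2, let α₁ ≥ α₂ ≥ … ≥ αₙ and β₁ ≥ β₂ ≥ … ≥ β_{n−1} be real numbers with α_i ≠ β_j for all i, j. Let M be the n×n matrix whose entry (i,j) for 1 ≤ j ≤ n−1 is sign(α_i − β_j) and whose last column entries M_{i,n} all equal 1. Then det M = 2^{n−1} if the interlacing inequalities α₁ ≥ β₁ ≥ α₂ ≥ β₂ ≥ … ≥ β_{n−1} ≥ αₙ hold, and det M = 0 otherwise. -/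
/-!
Because `α` is antitone, column `j < n` of the sign matrix is `+1` on the first `c j` rows and
`-1` below them, where `c j = #{i | β j < α i}`. Adding the last column to every other column and
factoring out `2` from each of them leaves the `0/1` matrix whose columns are the indicators of
the initial segments of lengths `c 0 ≤ ⋯ ≤ c (n - 2) ≤ n`. Its determinant vanishes if some
column is zero or two columns coincide; otherwise the lengths are `1, 2, …, n`, which is exactly
interlacing, and the matrix is unitriangular.
-/

open Matrix Finset

theorem Fin.monotone_snoc {α : Type*} [Preorder α] {n : ℕ} {f : Fin n → α} {a : α}
    (hf : Monotone f) (ha : ∀ i, f i ≤ a) : Monotone (Fin.snoc f a : Fin (n + 1) → α) := by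
  intro i j hij
  cases j using Fin.lastCases with
  | last => cases i using Fin.lastCases <;> simp [ha]
  | cast j =>
    cases i using Fin.lastCases with
    | last => exact absurd hij (Fin.castSucc_lt_last j).not_ge
    | cast i => simpa using hf (by simpa using hij)

theorem Fin.eq_succ_of_strictMono {n : ℕ} {c : Fin n → ℕ} (hc : StrictMono c)
    (hpos : ∀ j, 0 < c j) (hle : ∀ j, c j ≤ n) (j : Fin n) : c j = j + 1 := by
  let d : Fin n → Fin n := fun j => ⟨c j - 1, by have := hle j; have := hpos j; omega⟩
  have hd : StrictMono d := fun a b hab => by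
    have := hc hab; have := hpos a; simp only [d, Fin.mk_lt_mk]; omega
  have hj : c j - 1 = j := congrArg Fin.val (congrFun hd.eq_id j)
  have := hpos j
  omega

theorem Fin.lt_card_filter_iff {n : ℕ} {p : Fin n → Prop} [DecidablePred p] (hp : Antitone p)
    (i : Fin n) : (i : ℕ) < #{r | p r} ↔ p i := by
  constructor
  · intro hi
    by_contra hpi
    have hsub : univ.filter (fun r => p r) ⊆ Iio i := fun r hr => by
      rw [mem_filter] at hr
      exact mem_Iio.mpr (lt_of_not_ge fun hir => hpi (hp hir hr.2))
    have := card_le_card hsub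
    rw [Fin.card_Iio] at this
    omega
  · intro hpi
    have hsub : Iic i ⊆ univ.filter (fun r => p r) := fun r hr => by
      simpa using hp (mem_Iic.mp hr) hpi
    have := card_le_card hsub
    rw [Fin.card_Iic] at this
    omega

theorem Fin.card_filter_eq_succ_iff {n : ℕ} {p : Fin (n + 1) → Prop} [DecidablePred p]
    (hp : Antitone p) (j : Fin n) : #{r | p r} = j + 1 ↔ p j.castSucc ∧ ¬ p j.succ := by
  rw [← Fin.lt_card_filter_iff hp, ← Fin.lt_card_filter_iff hp]
  simp only [Fin.val_castSucc, Fin.val_succ]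
  omega

def prefixIndicatorMatrix (R : Type*) [CommRing R] {n : ℕ} (c : Fin n → ℕ) :
    Matrix (Fin n) (Fin n) R :=
  of fun i j => if (i : ℕ) < c j then 1 else 0

section

variable {R : Type*} [CommRing R]

theorem det_prefixIndicatorMatrix {n : ℕ} (c : Fin n → ℕ) (hc : Monotone c)
    (hle : ∀ j, c j ≤ n) :
    det (prefixIndicatorMatrix R c) = if ∀ j, c j = j + 1 then 1 else 0 := by
  split_ifs with h
  · have htri : (prefixIndicatorMatrix R c).IsUpperTriangular := fun i j (hji : j < i) => by
      simp [prefixIndicatorMatrix, h, hji]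
    rw [det_of_isUpperTriangular htri]
    simp [prefixIndicatorMatrix, h]
  · by_contra hdet
    have hpos : ∀ j, 0 < c j := fun j => Nat.pos_of_ne_zero fun hj =>
      hdet (det_eq_zero_of_column_eq_zero j fun i => by simp [prefixIndicatorMatrix, hj])
    have hinj : Function.Injective c := fun j j' hjj => by_contra fun hne =>
      hdet (det_zero_of_column_eq hne fun i => by simp [prefixIndicatorMatrix, hjj])
    exact h (Fin.eq_succ_of_strictMono (hc.strictMono_of_injective hinj) hpos hle)

theorem det_two_mul_sub_col_last {m : ℕ} (P : Matrix (Fin (m + 1)) (Fin (m + 1)) R) :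
    det (of fun i j => if j = Fin.last m then P i j else 2 * P i j - P i (Fin.last m))
      = 2 ^ m * det P := by
  let v : Fin (m + 1) → R := Fin.snoc (fun _ => 2) 1
  let w : Fin (m + 1) → R := Fin.snoc (fun _ => 1) 0
  let U : Matrix (Fin (m + 1)) (Fin (m + 1)) R :=
    diagonal v - vecMulVec (Pi.single (Fin.last m) 1) w
  have hfactor : (of fun i j => if j = Fin.last m then P i j else 2 * P i j - P i (Fin.last m))
      = P * U := by
    ext i j
    cases j using Fin.lastCases <;>
      simp [U, v, w, Matrix.mul_sub, mul_vecMulVec, vecMulVec_apply, mul_comm]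
  have hU : U.IsLowerTriangular := fun i j (hij : i < j) => by
    simp [U, vecMulVec_apply, hij.ne, (hij.trans_le (Fin.le_last j)).ne']
  rw [hfactor, det_mul, det_of_isLowerTriangular U hU, Fin.prod_univ_castSucc]
  simp [U, v, w, vecMulVec_apply, Fin.castSucc_ne_last, mul_comm]

end

theorem Real.sign_sub_of_ne {a b : ℝ} (h : a ≠ b) :
    Real.sign (a - b) = if b < a then 1 else -1 := by
  rcases h.lt_or_gt with hab | hab
  · rw [if_neg hab.not_gt, Real.sign_of_neg (sub_neg.mpr hab)]
  · rw [if_pos hab, Real.sign_of_pos (sub_pos.mpr hab)]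

open scoped Classical in
/-- eq. (9) of the paper: the determinant of the `n×n` matrix whose first
`n-1` columns are `sign(α_i - β_j)` and whose last column is all `1`'s equals `2^{n-1}`
times the characteristic function of the Cauchy–Rayleigh interlacing region.
Here `n = M + 2`. -/
theorem stmt_2 (M : ℕ) (α : Fin (M + 2) → ℝ) (β : Fin (M + 1) → ℝ)
    (hα : Antitone α) (hβ : Antitone β) (hne : ∀ i j, α i ≠ β j) :
    Matrix.det (Matrix.of fun i j : Fin (M + 2) =>
        if h : (j : ℕ) < M + 1 then Real.sign (α i - β ⟨j, h⟩) else 1)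
      = if ∀ i : Fin (M + 1), β i ≤ α i.castSucc ∧ α i.succ ≤ β i
          then 2 ^ (M + 1) else 0 := by
  have hbelow : ∀ j, Antitone fun i => β j < α i := fun j _ _ hab h => h.trans_le (hα hab)
  let c : Fin (M + 2) → ℕ := Fin.snoc (fun j => #{i | β j < α i}) (M + 2)
  have hc : Monotone c := Fin.monotone_snoc
    (fun j j' hjj => card_le_card fun i hi => by simpa using (hβ hjj).trans_lt (by simpa using hi))
    (fun j => card_le_univ _ |>.trans_eq (Fintype.card_fin _))
  let P := prefixIndicatorMatrix ℝ c
  have hsign : (of fun i j : Fin (M + 2) =>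
      if h : (j : ℕ) < M + 1 then Real.sign (α i - β ⟨j, h⟩) else 1)
      = of fun i j => if j = Fin.last _ then P i j else 2 * P i j - P i (Fin.last _) := by
    ext i j
    cases j using Fin.lastCases with
    | last => simp [P, prefixIndicatorMatrix, c]
    | cast j =>
      simp only [of_apply, Fin.val_castSucc, j.isLt, dif_pos, Real.sign_sub_of_ne (hne i j),
        P, prefixIndicatorMatrix, c, Fin.castSucc_ne_last, ↓reduceIte, Fin.snoc_castSucc,
        Fin.snoc_last, Fin.is_lt, Fin.lt_card_filter_iff (hbelow j), mul_ite, mul_one, mul_zero]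
      split_ifs <;> norm_num
  have hinterlace : (∀ j, c j = j + 1) ↔ ∀ j, β j ≤ α j.castSucc ∧ α j.succ ≤ β j := by
    rw [Fin.forall_fin_succ']
    simp only [c, Fin.snoc_castSucc, Fin.snoc_last, Fin.val_last,
      and_true, Fin.val_castSucc, Fin.card_filter_eq_succ_iff (hbelow _), not_lt]
    exact forall_congr' fun j =>
      and_congr_left' (lt_iff_le_and_ne.trans (and_iff_left (hne _ j).symm))
  rw [hsign, det_two_mul_sub_col_last, det_prefixIndicatorMatrix c hc
    fun j => (hc (Fin.le_last j)).trans_eq (by simp [c])]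
  simp only [hinterlace, mul_ite, mul_one, mul_zero]
end

section
/- Let n ≥ 2, let α₁ ≥ α₂ ≥ … ≥ αₙ and β₁ ≥ β₂ ≥ … ≥ β_{n−1} be real numbers with α_i ≠ β_j for all i, j. Let N be the (n−1)×(n−1) matrix with entries N_{i,j} = 1 if αₙ < β_j < α_i and N_{i,j} = 0 otherwise. Then det N = 1 if the interlacing inequalities α₁ ≥ β₁ ≥ α₂ ≥ β₂ ≥ … ≥ β_{n−1} ≥ αₙ hold, and det N = 0 otherwise. -/
/-!
Since `α` is antitone, the rows `k` with `N k j = 1` form an initial segment `{k | k < c j}`,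
where `c j` counts them, and since `β` is antitone, `c` is monotone on the columns where it
does not vanish. A matrix whose columns are such prefix indicators has determinant zero as
soon as some `c j` vanishes (a zero column) or two of them coincide (equal columns).
Otherwise `c` is strictly increasing from `Fin n` into `[1, n]`, which forces `c j = j + 1`:
the matrix is unitriangular and its determinant is `1`. Finally, `c j = j + 1` says exactly
that `α (j + 1) < β j < α j`, i.e. the interlacing inequalities at `j`.
-/

open Finset

namespace Fin

theorem mem_iff_val_lt_card_of_isLowerSet {n : ℕ} {s : Finset (Fin n)}
    (hs : IsLowerSet (s : Set (Fin n))) (k : Fin n) : k ∈ s ↔ (k : ℕ) < #s := by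
  constructor
  · intro hk
    have hsub : Iic k ⊆ s := fun x hx => hs (mem_Iic.mp hx) hk
    simpa using card_le_card hsub
  · intro hlt
    by_contra hk
    have hsub : s ⊆ Iio k := fun x hx =>
      mem_Iio.mpr (lt_of_not_ge fun hkx => hk (hs hkx hx))
    have := card_le_card hsub
    simp only [card_Iio] at this
    omega

theorem val_add_one_eq_of_strictMono {n : ℕ} {c : Fin n → ℕ} (hc : StrictMono c)
    (hpos : ∀ j, 0 < c j) (hle : ∀ j, c j ≤ n) (j : Fin n) : c j = j + 1 := by
  let g : Fin n → Fin n := fun i => ⟨c i - 1, by have := hpos i; have := hle i; omega⟩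
  have hg : StrictMono g := fun i i' h => by
    have := hc h; have := hpos i; simp only [g, Fin.mk_lt_mk]; omega
  have hfix : c j - 1 = j := congrArg Fin.val (hg.apply_eq (x := j))
  have := hpos j
  omega

end Fin

namespace Matrix

def prefixMatrix {n : ℕ} (R : Type*) [Zero R] [One R] (c : Fin n → ℕ) :
    Matrix (Fin n) (Fin n) R :=
  of fun k j => if (k : ℕ) < c j then 1 else 0

variable {n : ℕ} {R : Type*} [CommRing R]

theorem det_prefixMatrix_of_forall_eq_val_add_one {c : Fin n → ℕ} (hc : ∀ j, c j = j + 1) :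
    (prefixMatrix R c).det = 1 := by
  have hupper : (prefixMatrix R c).IsUpperTriangular := fun k j hjk => by
    have : ¬ (k : ℕ) < j + 1 := by simp only [id] at hjk; omega
    simp only [prefixMatrix, of_apply, hc, if_neg this]
  rw [det_of_isUpperTriangular hupper]
  exact prod_eq_one fun j _ => by simp [prefixMatrix, hc]

theorem det_prefixMatrix_eq_zero_of_eq_zero {c : Fin n → ℕ} {j : Fin n} (hj : c j = 0) :
    (prefixMatrix R c).det = 0 :=
  det_eq_zero_of_column_eq_zero j fun k => by simp [prefixMatrix, hj]

theorem det_prefixMatrix_eq_zero_of_eq {c : Fin n → ℕ} {j j' : Fin n} (hne : j ≠ j')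
    (hj : c j = c j') : (prefixMatrix R c).det = 0 :=
  det_zero_of_column_eq hne fun k => by simp [prefixMatrix, hj]

theorem det_prefixMatrix {c : Fin n → ℕ} (hle : ∀ j, c j ≤ n)
    (hmono : MonotoneOn c {j | c j ≠ 0}) :
    (prefixMatrix R c).det = if ∀ j, c j = j + 1 then 1 else 0 := by
  split_ifs with hc
  · exact det_prefixMatrix_of_forall_eq_val_add_one hc
  by_contra hdet
  have hpos : ∀ j, 0 < c j := fun j =>
    Nat.pos_of_ne_zero fun h => hdet (det_prefixMatrix_eq_zero_of_eq_zero h)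
  have hinj : Function.Injective c := fun j j' h =>
    by_contra fun hne => hdet (det_prefixMatrix_eq_zero_of_eq hne h)
  have hstrict : StrictMono c := fun j j' hjj' =>
    lt_of_le_of_ne (hmono (hpos j).ne' (hpos j').ne' hjj'.le) (hinj.ne hjj'.ne)
  exact hc (Fin.val_add_one_eq_of_strictMono hstrict hpos hle)

end Matrix

section Interlacing

variable {M : ℕ} {α : Fin (M + 2) → ℝ} {β : Fin (M + 1) → ℝ}

variable (α β) in
noncomputable def colSupport (j : Fin (M + 1)) : Finset (Fin (M + 1)) :=
  {k | α (Fin.last (M + 1)) < β j ∧ β j < α k.castSucc}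

theorem isLowerSet_colSupport (hα : Antitone α) (j : Fin (M + 1)) :
    IsLowerSet (colSupport α β j : Set (Fin (M + 1))) := fun k k' hk' hk => by
  simp only [colSupport, coe_filter, mem_univ, true_and, Set.mem_ofPred_eq] at hk ⊢
  exact ⟨hk.1, hk.2.trans_le (hα (Fin.castSucc_le_castSucc_iff.mpr hk'))⟩

theorem monotoneOn_card_colSupport (hβ : Antitone β) :
    MonotoneOn (fun j => #(colSupport α β j)) {j | #(colSupport α β j) ≠ 0} := by
  intro j _ j' hj' hjj'
  obtain ⟨k, hk⟩ := card_ne_zero.mp hj'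
  refine card_le_card fun l hl => ?_
  simp only [colSupport, mem_filter, mem_univ, true_and] at hk hl ⊢
  exact ⟨hk.1, (hβ hjj').trans_lt hl.2⟩

theorem card_colSupport_eq_iff (hα : Antitone α) (hne : ∀ i j, α i ≠ β j) (j : Fin (M + 1)) :
    #(colSupport α β j) = j + 1 ↔ β j ≤ α j.castSucc ∧ α j.succ ≤ β j := by
  have hmem (k : Fin (M + 1)) : k ∈ colSupport α β j ↔
      α (Fin.last (M + 1)) < β j ∧ β j < α k.castSucc := by
    simp [colSupport]
  constructor
  · intro hcard
    have hlt (k : Fin (M + 1)) : k ∈ colSupport α β j ↔ (k : ℕ) < j + 1 := by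
      rw [Fin.mem_iff_val_lt_card_of_isLowerSet (isLowerSet_colSupport hα j), hcard]
    obtain ⟨hlast, hdiag⟩ := (hmem j).mp ((hlt j).mpr j.val.lt_succ_self)
    refine ⟨hdiag.le, not_lt.mp fun hsucc => ?_⟩
    obtain ⟨k, hk⟩ | hk := j.succ.eq_castSucc_or_eq_last
    · have hjk : (k : ℕ) = j + 1 := by simpa using congrArg Fin.val hk.symm
      have := (hlt k).mp ((hmem k).mpr ⟨hlast, hk ▸ hsucc⟩)
      omega
    · exact (hk ▸ hsucc).not_gt hlast
  · rintro ⟨hdiag, hsucc⟩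
    suffices colSupport α β j = Iic j by rw [this, Fin.card_Iic]
    ext k
    rw [hmem, mem_Iic]
    constructor
    · rintro ⟨-, hk⟩
      refine not_lt.mp fun hjk => (hk.trans_le ?_).not_ge hsucc
      exact hα (Fin.succ_le_castSucc_iff.mpr hjk)
    · intro hkj
      have hlast : α (Fin.last (M + 1)) ≤ β j := (hα (Fin.le_last _)).trans hsucc
      have hk : β j ≤ α k.castSucc := hdiag.trans (hα (Fin.castSucc_le_castSucc_iff.mpr hkj))
      exact ⟨hlast.lt_of_ne (hne _ _), hk.lt_of_ne (hne _ _).symm⟩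

end Interlacing

open scoped Classical in
/-- Olshanski's determinant formula (eq. (8) of the paper): the determinant
of the `(n-1)×(n-1)` matrix of characteristic functions `N_{i,j} = 1_{αₙ < β_j < α_i}`
equals the characteristic function of the Cauchy–Rayleigh interlacing region.
Here `n = M + 2`. -/
theorem stmt_3 (M : ℕ) (α : Fin (M + 2) → ℝ) (β : Fin (M + 1) → ℝ)
    (hα : Antitone α) (hβ : Antitone β) (hne : ∀ i j, α i ≠ β j) :
    Matrix.det (Matrix.of fun i j : Fin (M + 1) =>
        if α (Fin.last (M + 1)) < β j ∧ β j < α i.castSucc then (1 : ℝ) else 0)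
      = if ∀ i : Fin (M + 1), β i ≤ α i.castSucc ∧ α i.succ ≤ β i then 1 else 0 := by
  have hN : (Matrix.of fun i j : Fin (M + 1) =>
        if α (Fin.last (M + 1)) < β j ∧ β j < α i.castSucc then (1 : ℝ) else 0) =
      Matrix.prefixMatrix ℝ fun j => #(colSupport α β j) := by
    ext i j
    simp only [Matrix.prefixMatrix, Matrix.of_apply,
      ← Fin.mem_iff_val_lt_card_of_isLowerSet (isLowerSet_colSupport hα j)]
    simp [colSupport]
  have hle (j : Fin (M + 1)) : #(colSupport α β j) ≤ M + 1 :=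
    (card_le_univ _).trans_eq (Fintype.card_fin _)
  rw [hN, Matrix.det_prefixMatrix hle (monotoneOn_card_colSupport hβ)]
  simp only [card_colSupport_eq_iff hα hne]
end

section
/- Let n ≥ 2 and let α₁ ≥ α₂ ≥ … ≥ α_{n−1} ≥ αₙ = 0 be integers. Then the maximum, over all integer vectors γ = (γ₁,…,γ_{n−1}) with γ₁ ≥ γ₂ ≥ … ≥ γ_{n−1} = 0, of the number of integers c such that α_{i+1} ≤ γ_i + c ≤ α_i for all 1 ≤ i ≤ n−1, equals min_{1≤i≤n−1}(α_i − α_{i+1}) + 1. -/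
/-!
A shift `c` is admissible exactly when `c` lies in every interval `[α_{i+1} - γ_i, α_i - γ_i]`, so
the number of admissible shifts is at most the length `α_j - α_{j+1} + 1` of the shortest one.
For `γ_i = α_{i+1}` the intervals are `[0, α_i - α_{i+1}]`, whose intersection has exactly that
many elements.
-/

open Finset

lemma Int.natCard_Icc (a b : ℤ) : Nat.card (Set.Icc a b) = (b + 1 - a).toNat := by
  rw [Nat.card_eq_fintype_card, Fintype.card_Icc, Int.card_Icc]

section CommonShifts

variable {ι : Type*} [Fintype ι] [Nonempty ι] (lo hi : ι → ℤ)

lemma natCard_shifts_le (γ : ι → ℤ) :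
    Nat.card {c : ℤ // ∀ i, lo i ≤ γ i + c ∧ γ i + c ≤ hi i} ≤
      (univ.inf' univ_nonempty (fun i => hi i - lo i) + 1).toNat := by
  obtain ⟨j, -, hj⟩ := exists_mem_eq_inf' univ_nonempty fun i => hi i - lo i
  have hsub : {c : ℤ | ∀ i, lo i ≤ γ i + c ∧ γ i + c ≤ hi i} ⊆
      Set.Icc (lo j - γ j) (hi j - γ j) := fun c hc =>
    ⟨by linarith [(hc j).1], by linarith [(hc j).2]⟩
  calc _ ≤ Nat.card (Set.Icc (lo j - γ j) (hi j - γ j)) := Nat.card_mono (Set.finite_Icc _ _) hsub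
    _ = _ := by rw [Int.natCard_Icc, hj]; congr 1; ring

lemma natCard_shifts_self :
    Nat.card {c : ℤ // ∀ i, lo i ≤ lo i + c ∧ lo i + c ≤ hi i} =
      (univ.inf' univ_nonempty (fun i => hi i - lo i) + 1).toNat := by
  have hset : {c : ℤ | ∀ i, lo i ≤ lo i + c ∧ lo i + c ≤ hi i} =
      Set.Icc 0 (univ.inf' univ_nonempty fun i => hi i - lo i) := by
    ext c
    simp only [Set.mem_ofPred_eq, Set.mem_Icc, le_inf'_iff, mem_univ, forall_const]
    refine ⟨fun h => ⟨by linarith [(h (Classical.arbitrary ι)).1], fun i => by linarith [(h i).2]⟩,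
      fun h i => ⟨by linarith [h.1], by linarith [h.2 i]⟩⟩
  refine (Nat.card_congr (Equiv.setCongr hset)).trans ?_
  rw [Int.natCard_Icc, sub_zero]

end CommonShifts

/-- Corollary 2 of the paper: the largest branching multiplicity
`br_α(γ) = #{c ∈ ℤ : α_{i+1} ≤ γ_i + c ≤ α_i ∀i}` over dominant `γ` with `γ_{n-1} = 0`
equals `1` plus the smallest Dynkin component `min_i (α_i - α_{i+1})` (here `n = M + 2`). -/
theorem stmt_10 (M : ℕ) (α : Fin (M + 2) → ℤ) (hα : Antitone α)
    (h0 : α (Fin.last (M + 1)) = 0) :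
    IsGreatest {k : ℤ | ∃ γ : Fin (M + 1) → ℤ, Antitone γ ∧ γ (Fin.last M) = 0 ∧
        k = Nat.card {c : ℤ // ∀ i : Fin (M + 1),
              α i.succ ≤ γ i + c ∧ γ i + c ≤ α i.castSucc}}
      ((Finset.univ.inf' Finset.univ_nonempty
          fun i : Fin (M + 1) => α i.castSucc - α i.succ) + 1) := by
  have hmin : 0 ≤ univ.inf' univ_nonempty fun i : Fin (M + 1) => α i.castSucc - α i.succ :=
    le_inf' _ _ fun i _ => sub_nonneg.2 (hα (Fin.castSucc_le_succ i))
  refine ⟨⟨fun i => α i.succ, fun i j hij => hα (Fin.succ_le_succ_iff.2 hij),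
    (congrArg α (Fin.succ_last M)).trans h0, ?_⟩, ?_⟩
  · rw [natCard_shifts_self]
    omega
  · rintro k ⟨γ, -, -, rfl⟩
    have := natCard_shifts_le (fun i => α i.succ) (fun i => α i.castSucc) γ
    omega
end

section
/- Let α₁ ≥ α₂ ≥ 0 and γ ≥ 0 be real numbers. Then ½(|α₁ − γ| − |α₁ − α₂ − γ| − |α₂ − γ|) − ½(|α₁ + γ| − |α₁ − α₂ + γ| − |α₂ + γ|) = max(0, min(α₁ − γ, α₂) − max(α₂ − γ, 0)). -/
/-! For `γ ≥ 0` the reflected half `γ ↦ -γ` only involves nonnegative arguments and equals `-γ / 2`.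
Writing `|x| = 2 x⁺ - x`, the left-hand side becomes `(α₁ - γ)⁺ - (α₁ - α₂ - γ)⁺ - (α₂ - γ)⁺`.
On the other side, the length of `[0, α₂] ∩ [α₂ - γ, α₁ - γ]` is the difference of the lengths of
`[0, α₂] ∩ (-∞, α₁ - γ]` and `[0, α₂] ∩ (-∞, α₂ - γ]`, and `|[0, b] ∩ (-∞, t]| = t⁺ - (t - b)⁺`. -/

section LinearOrderedField

variable {K : Type*} [Field K] [LinearOrder K] [IsStrictOrderedRing K]

lemma abs_eq_two_mul_max_zero_sub (x : K) : |x| = 2 * max x 0 - x := by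
  linarith [max_zero_add_max_neg_zero_eq_abs_self x, max_zero_sub_max_neg_zero_eq_self x]

lemma min_max_zero_eq_sub {b : K} (t : K) (hb : 0 ≤ b) :
    min (max t 0) b = max t 0 - max (t - b) 0 := by
  simp only [max_def, min_def]
  split_ifs <;> linarith

lemma max_zero_min_sub_max_zero {u v b : K} (huv : u ≤ v) (hb : 0 ≤ b) :
    max 0 (min v b - max u 0) = min (max v 0) b - min (max u 0) b := by
  simp only [max_def, min_def]
  split_ifs <;> linarith

end LinearOrderedField

/-- the explicit absolute-value formula (eq. (13) of the paper) for the
modified orbital integral `K̄(α;γ)` for `n = 3`, expressed as an identity of real numbers. -/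
theorem stmt_14 (α₁ α₂ γ : ℝ) (h1 : α₂ ≤ α₁) (h2 : 0 ≤ α₂) (hγ : 0 ≤ γ) :
    (1 / 2) * (|α₁ - γ| - |α₁ - α₂ - γ| - |α₂ - γ|)
      - (1 / 2) * (|α₁ + γ| - |α₁ - α₂ + γ| - |α₂ + γ|)
    = max 0 (min (α₁ - γ) α₂ - max (α₂ - γ) 0) := by
  have reflected : |α₁ + γ| - |α₁ - α₂ + γ| - |α₂ + γ| = -γ := by
    rw [abs_of_nonneg (by linarith), abs_of_nonneg (by linarith), abs_of_nonneg (by linarith)]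
    ring
  have posPart_neg_γ : max (α₂ - γ - α₂) 0 = 0 := max_eq_right (by linarith)
  rw [reflected, max_zero_min_sub_max_zero (by linarith) h2, min_max_zero_eq_sub _ h2,
    min_max_zero_eq_sub _ h2, posPart_neg_γ, abs_eq_two_mul_max_zero_sub (α₁ - γ),
    abs_eq_two_mul_max_zero_sub (α₁ - α₂ - γ), abs_eq_two_mul_max_zero_sub (α₂ - γ),
    show α₁ - α₂ - γ = α₁ - γ - α₂ by ring]
  ring
end

section
/- Let α₁ ≥ α₂ ≥ α₃ ≥ 0 and γ₁ ≥ γ₂ ≥ 0 be real numbers, and set α₄ = 0, γ₃ = 0. Then there exists c ∈ ℝ with α_{i+1} ≤ γ_i + c ≤ α_i for i = 1, 2, 3 if and only if all of the following hold: α₂ − α₃ ≤ γ₁ ≤ α₁, 0 ≤ γ₂ ≤ α₂, and 0 ≤ γ₁ − γ₂ ≤ α₁ − α₃. -/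
/-!
Writing the three conditions as `c ∈ [α₂ - γ₁, α₁ - γ₁] ∩ [α₃ - γ₂, α₂ - γ₂] ∩ [0, α₃]`, the
question is whether three intervals on the line meet. By one-dimensional Helly this happens iff
every lower endpoint lies below every upper endpoint. The three "diagonal" inequalities say that
each interval is nonempty and follow from `α₁ ≥ α₂ ≥ α₃ ≥ 0`; the six others are the listed
conditions.
-/

theorem exists_forall_le_and_le_iff {ι α : Type*} [Finite ι] [Nonempty ι] [LinearOrder α]
    (l u : ι → α) : (∃ c, ∀ i, l i ≤ c ∧ c ≤ u i) ↔ ∀ i j, l i ≤ u j := by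
  constructor
  · rintro ⟨c, hc⟩ i j
    exact (hc i).1.trans (hc j).2
  · intro h
    obtain ⟨k, hk⟩ := Finite.exists_max l
    exact ⟨l k, fun i => ⟨hk i, h k i⟩⟩

theorem stmt_17_general (a1 a2 a3 g1 g2 : ℝ)
    (h12 : a2 ≤ a1) (h23 : a3 ≤ a2) (h3 : 0 ≤ a3) :
    (∃ c : ℝ, (a2 ≤ g1 + c ∧ g1 + c ≤ a1) ∧ (a3 ≤ g2 + c ∧ g2 + c ≤ a2) ∧
        (0 ≤ c ∧ c ≤ a3)) ↔
      (a2 - a3 ≤ g1 ∧ g1 ≤ a1) ∧ (0 ≤ g2 ∧ g2 ≤ a2) ∧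
        (0 ≤ g1 - g2 ∧ g1 - g2 ≤ a1 - a3) := by
  constructor
  · rintro ⟨c, ⟨hl1, hu1⟩, ⟨hl2, hu2⟩, hl3, hu3⟩
    exact ⟨⟨by linarith, by linarith⟩, ⟨by linarith, by linarith⟩, by linarith, by linarith⟩
  · rintro ⟨⟨k1, k2⟩, ⟨k3, k4⟩, k5, k6⟩
    let l : Fin 3 → ℝ := ![a2 - g1, a3 - g2, 0]
    let u : Fin 3 → ℝ := ![a1 - g1, a2 - g2, a3]
    obtain ⟨c, hc⟩ := (exists_forall_le_and_le_iff l u).mpr fun i j => by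
      fin_cases i <;> fin_cases j <;> simp [l, u] <;> linarith
    have hc0 := hc 0
    have hc1 := hc 1
    have hc2 := hc 2
    simp only [l, u, Matrix.cons_val] at hc0 hc1 hc2
    exact ⟨c, ⟨by linarith, by linarith⟩, ⟨by linarith, by linarith⟩, hc2⟩

/-- the support polytope (eq. (16) of the paper) of the modified orbital
integral `K̄(α;γ)` for `n = 4`, with `α = (a1,a2,a3,0)` and `γ = (g1,g2,0)`. -/
theorem stmt_17 (a1 a2 a3 g1 g2 : ℝ)
    (h12 : a2 ≤ a1) (h23 : a3 ≤ a2) (h3 : 0 ≤ a3) (hg : g2 ≤ g1) (hg2 : 0 ≤ g2) :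
    (∃ c : ℝ, (a2 ≤ g1 + c ∧ g1 + c ≤ a1) ∧ (a3 ≤ g2 + c ∧ g2 + c ≤ a2) ∧
        (0 ≤ c ∧ c ≤ a3)) ↔
      (a2 - a3 ≤ g1 ∧ g1 ≤ a1) ∧ (0 ≤ g2 ∧ g2 ≤ a2) ∧
        (0 ≤ g1 - g2 ∧ g1 - g2 ≤ a1 - a3) :=
  stmt_17_general a1 a2 a3 g1 g2 h12 h23 h3
end

section
/- Let α₁ ≥ α₂ ≥ 0 and γ ≥ 0 be integers, and set A = α₁ + 2, B = α₂ + 1, G = γ + 1. Then the number of integers c such that α₂ ≤ γ + c ≤ α₁ and 0 ≤ c ≤ α₂ equals ½(|A − G| − |A − B − G| − |B − G|) − ½(|A + G| − |A − B + G| − |B + G|). -/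
/-! The count is the length of the integer interval
`[max 0 (α₂ - γ), min α₂ (α₁ - γ)]`, which in terms of `a = A - B`, `b = B`, `g = G` is
`min a g + min b g - min (a + b) g` (all three are positive). On the other side, for
`x, g ≥ 0` one has `|x + g| - |x - g| = 2 min x g`, and the right-hand side regroups into
exactly this combination of minima. -/

theorem abs_add_sub_abs_sub_eq_two_mul_min {α : Type*} [Ring α] [LinearOrder α]
    [IsStrictOrderedRing α] {x g : α} (hx : 0 ≤ x) (hg : 0 ≤ g) :
    |x + g| - |x - g| = 2 * min x g := by
  rw [abs_of_nonneg (add_nonneg hx hg)]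
  rcases le_total x g with hxg | hgx
  · rw [abs_of_nonpos (sub_nonpos.2 hxg), min_eq_left hxg]; noncomm_ring
  · rw [abs_of_nonneg (sub_nonneg.2 hgx), min_eq_right hgx]; noncomm_ring

theorem Int.natCard_shifted_Icc_inter_Icc (p q r s t : ℤ) :
    Nat.card {c : ℤ // (p ≤ t + c ∧ t + c ≤ q) ∧ (r ≤ c ∧ c ≤ s)}
      = (min s (q - t) + 1 - max r (p - t)).toNat := by
  have hset : {c : ℤ | (p ≤ t + c ∧ t + c ≤ q) ∧ (r ≤ c ∧ c ≤ s)}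
      = Set.Icc (max r (p - t)) (min s (q - t)) := by
    ext c
    simp only [Set.mem_ofPred_eq, Set.mem_Icc, max_le_iff, le_min_iff]
    omega
  change Nat.card {c : ℤ | (p ≤ t + c ∧ t + c ≤ q) ∧ (r ≤ c ∧ c ≤ s)} = _
  rw [hset, Nat.card_eq_card_toFinset, Set.toFinset_Icc, Int.card_Icc]

theorem natCard_branching_eq_min_combination {α₁ α₂ γ : ℤ} (h1 : α₂ ≤ α₁) (h2 : 0 ≤ α₂)
    (hγ : 0 ≤ γ) :
    (Nat.card {c : ℤ // (α₂ ≤ γ + c ∧ γ + c ≤ α₁) ∧ (0 ≤ c ∧ c ≤ α₂)} : ℤ)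
      = min (α₁ + 2 - (α₂ + 1)) (γ + 1) + min (α₂ + 1) (γ + 1) - min (α₁ + 2) (γ + 1) := by
  rw [Int.natCard_shifted_Icc_inter_Icc]
  omega

/-- the `n = 3` instance of Theorem 2 of the paper,
`br_α(γ) = K̄(α+ρ₃; γ+ρ₂)`, in explicit form. -/
theorem stmt_18 (α₁ α₂ γ : ℤ) (h1 : α₂ ≤ α₁) (h2 : 0 ≤ α₂) (hγ : 0 ≤ γ) :
    let A : ℝ := (α₁ : ℝ) + 2
    let B : ℝ := (α₂ : ℝ) + 1
    let G : ℝ := (γ : ℝ) + 1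
    (Nat.card {c : ℤ // (α₂ ≤ γ + c ∧ γ + c ≤ α₁) ∧ (0 ≤ c ∧ c ≤ α₂)} : ℝ)
      = 1 / 2 * (|A - G| - |A - B - G| - |B - G|)
        - 1 / 2 * (|A + G| - |A - B + G| - |B + G|) := by
  intro A B G
  have hcount := congrArg (Int.cast : ℤ → ℝ) (natCard_branching_eq_min_combination h1 h2 hγ)
  push_cast at hcount
  have hG : (0 : ℝ) ≤ G := by positivity
  have hB : (0 : ℝ) ≤ B := by positivity
  have hAB : (0 : ℝ) ≤ A - B := by
    simp only [A, B]
    linarith [(Int.cast_le (R := ℝ)).2 h1]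
  have hA : (0 : ℝ) ≤ A := by linarith
  rw [hcount]
  linarith [abs_add_sub_abs_sub_eq_two_mul_min hA hG,
    abs_add_sub_abs_sub_eq_two_mul_min hAB hG, abs_add_sub_abs_sub_eq_two_mul_min hB hG]
end
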